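/- Let c be the unique real solution of h(c − 1.48) = h(c) − 1.48·h′(c). Then 1.327 < h(c − 1.48) − h(c) < 1.328; that is, G(1.48) ≈ 1.327185. -/

import Mathlib

/-- The hill function `h(x) = arccos(tanh x)`. -/
noncomputable def hill (x : ℝ) : ℝ := Real.arccos (Real.tanh x)

/-- The derivative of the hill function: `h'(x) = -1/cosh x`. -/
noncomputable def hill' (x : ℝ) : ℝ := -1 / Real.cosh x

/-!
By the mean value theorem the tangent condition gives `h' ξ = h' c` for some `ξ ∈ (c - L, c)`;
as `h' = -1 / cosh` only sees `|x|`, this forces `ξ = -c`, hence `0 < c < L / 2`. On `[0, L / 2]`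
the tangent defect `F x = h (x - L) - h x + L h' x` is strictly increasing (its derivative is
`h' (x - L) - h' x + L sinh x / cosh² x`), so its zero `c` is pinned down by the sign change
`F 0.475 < 0 < F 0.4756`. These two signs are certified with `h x = 2 arctan (exp (-x))`, the
alternating Taylor bounds of `arctan` and Taylor bounds of `exp`. Finally
`G = -L h' c = L / cosh c`, and `cosh c` lies between `cosh 0.475` and `cosh 0.4756`.
-/

open Real

lemma tanh_eq_cos_two_mul_arctan_exp_neg (x : ℝ) : tanh x = cos (2 * arctan (exp (-x))) := by
  have h := exp_pos (-x)
  rw [tanh_eq, cos_two_mul, cos_sq_arctan, ← inv_inv (exp x), ← exp_neg]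
  field_simp
  ring

lemma hill_eq_two_mul_arctan_exp (x : ℝ) : hill x = 2 * arctan (exp (-x)) := by
  have h₀ : 0 < arctan (exp (-x)) := arctan_pos.mpr (exp_pos _)
  have h₁ := arctan_lt_pi_div_two (exp (-x))
  rw [hill, tanh_eq_cos_two_mul_arctan_exp_neg, arccos_cos] <;> linarith

lemma hill_neg (x : ℝ) : hill (-x) = π - hill x := by
  rw [hill, hill, tanh_neg, arccos_neg]

lemma hill'_eq (x : ℝ) : hill' x = -2 * (exp (-x) / (1 + exp (-x) ^ 2)) := by
  have h := exp_pos (-x)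
  rw [hill', cosh_eq, ← inv_inv (exp x), ← exp_neg]
  field_simp

lemma hasDerivAt_hill (x : ℝ) : HasDerivAt hill (hill' x) x := by
  have h := ((hasDerivAt_arctan _).comp x ((hasDerivAt_neg x).exp)).const_mul 2
  rw [funext hill_eq_two_mul_arctan_exp, hill'_eq]
  exact h.congr_deriv (by ring)

lemma hasDerivAt_hill' (x : ℝ) : HasDerivAt hill' (sinh x / cosh x ^ 2) x := by
  have h := (hasDerivAt_const x (-1 : ℝ)).div (hasDerivAt_cosh x) (cosh_pos x).ne'
  exact h.congr_deriv (by ring)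

lemma hill'_le_hill' {x y : ℝ} : hill' x ≤ hill' y ↔ |x| ≤ |y| := by
  rw [hill', hill', neg_div, neg_div, neg_le_neg_iff, one_div_le_one_div (cosh_pos _) (cosh_pos _),
    cosh_le_cosh]

lemma hill'_lt_hill' {x y : ℝ} : hill' x < hill' y ↔ |x| < |y| := by
  rw [hill', hill', neg_div, neg_div, neg_lt_neg_iff, one_div_lt_one_div (cosh_pos _) (cosh_pos _),
    cosh_lt_cosh]

theorem hill_tangent_mem_Ioo {L c : ℝ} (hL : 0 < L) (hc : hill (c - L) = hill c - L * hill' c) :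
    c ∈ Set.Ioo 0 (L / 2) := by
  have hcont : Continuous hill := continuous_iff_continuousAt.mpr fun x ↦
    (hasDerivAt_hill x).continuousAt
  obtain ⟨ξ, ⟨hξl, hξr⟩, hξ⟩ := exists_hasDerivAt_eq_slope hill hill'
    (by linarith : c - L < c) hcont.continuousOn fun x _ ↦ hasDerivAt_hill x
  have hslope : hill' ξ = hill' c := by
    rw [hξ, hc, sub_sub_cancel, sub_sub_cancel, mul_div_cancel_left₀ _ hL.ne']
  have habs : |ξ| = |c| := le_antisymm (hill'_le_hill'.mp hslope.le) (hill'_le_hill'.mp hslope.ge)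
  rcases abs_eq_abs.mp habs with h | h
  · exact absurd h hξr.ne
  · constructor <;> linarith

noncomputable def hillTangentDefect (L x : ℝ) : ℝ := hill (x - L) - hill x + L * hill' x

lemma hasDerivAt_hillTangentDefect (L x : ℝ) :
    HasDerivAt (hillTangentDefect L) (hill' (x - L) - hill' x + L * (sinh x / cosh x ^ 2)) x := by
  have h := (((hasDerivAt_hill (x - L)).comp x ((hasDerivAt_id x).sub_const L)).sub
    (hasDerivAt_hill x)).add ((hasDerivAt_hill' x).const_mul L)
  exact h.congr_deriv (by simp)

lemma strictMonoOn_hillTangentDefect {L : ℝ} (hL : 0 < L) :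
    StrictMonoOn (hillTangentDefect L) (Set.Icc 0 (L / 2)) := by
  refine strictMonoOn_of_hasDerivWithinAt_pos (convex_Icc _ _)
    (continuous_iff_continuousAt.mpr fun x ↦
      (hasDerivAt_hillTangentDefect L x).continuousAt).continuousOn
    (fun x _ ↦ (hasDerivAt_hillTangentDefect L x).hasDerivWithinAt) fun x hx ↦ ?_
  rw [interior_Icc] at hx
  obtain ⟨hx0, hxL⟩ := hx
  have hfar : hill' x ≤ hill' (x - L) := hill'_le_hill'.mpr <| by
    rw [abs_of_pos hx0, abs_of_neg (by linarith)]
    linarith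
  have hconvex : 0 < sinh x / cosh x ^ 2 := div_pos (sinh_pos_iff.mpr hx0) (by positivity)
  nlinarith

noncomputable def arctanTaylor (n : ℕ) (x : ℝ) : ℝ :=
  ∑ k ∈ Finset.range n, (-1) ^ k * x ^ (2 * k + 1) / (2 * k + 1)

lemma hasDerivAt_arctanTaylor (n : ℕ) (x : ℝ) :
    HasDerivAt (arctanTaylor n) (∑ k ∈ Finset.range n, (-x ^ 2) ^ k) x := by
  have h := HasDerivAt.fun_sum (u := Finset.range n) fun k _ ↦
    ((hasDerivAt_pow (2 * k + 1) x).const_mul ((-1 : ℝ) ^ k)).div_const (2 * k + 1 : ℝ)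
  refine h.congr_deriv (Finset.sum_congr rfl fun k _ ↦ ?_)
  field_simp
  push_cast
  ring

lemma neg_one_pow_mul_arctan_sub_arctanTaylor_nonneg (n : ℕ) {x : ℝ} (hx : 0 ≤ x) :
    0 ≤ (-1) ^ n * (arctan x - arctanTaylor n x) := by
  have hderiv (t : ℝ) : HasDerivAt (fun t ↦ (-1) ^ n * (arctan t - arctanTaylor n t))
      (t ^ (2 * n) / (1 + t ^ 2)) t := by
    refine (((hasDerivAt_arctan t).sub (hasDerivAt_arctanTaylor n t)).const_mul _).congr_deriv ?_
    have hgeom := geom_sum_mul (-t ^ 2) n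
    field_simp
    rw [show (1 + t ^ 2) * ∑ k ∈ Finset.range n, (-t ^ 2) ^ k = 1 - (-t ^ 2) ^ n by linarith,
      sub_sub_cancel, ← mul_pow, pow_mul]
    ring
  have hmono : Monotone fun t ↦ (-1) ^ n * (arctan t - arctanTaylor n t) :=
    monotone_of_hasDerivAt_nonneg hderiv fun t ↦
      div_nonneg (by rw [pow_mul]; positivity) (by positivity)
  simpa [arctanTaylor] using hmono hx

lemma arctanTaylor_le_arctan {n : ℕ} (hn : Even n) {x : ℝ} (hx : 0 ≤ x) :
    arctanTaylor n x ≤ arctan x := by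
  have h := neg_one_pow_mul_arctan_sub_arctanTaylor_nonneg n hx
  rw [hn.neg_one_pow, one_mul] at h
  linarith

lemma arctan_le_arctanTaylor {n : ℕ} (hn : Odd n) {x : ℝ} (hx : 0 ≤ x) :
    arctan x ≤ arctanTaylor n x := by
  have h := neg_one_pow_mul_arctan_sub_arctanTaylor_nonneg n hx
  rw [hn.neg_one_pow, neg_one_mul] at h
  linarith

lemma div_one_add_sq_le_div_one_add_sq {p q : ℝ} (hp : 0 ≤ p) (hpq : p ≤ q) (hq : q ≤ 1) :
    p / (1 + p ^ 2) ≤ q / (1 + q ^ 2) := by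
  rw [div_le_div_iff₀ (by positivity) (by positivity)]
  nlinarith [mul_nonneg (sub_nonneg.2 hpq) (by nlinarith : 0 ≤ 1 - p * q)]

lemma hill'_le_of_le_exp_neg {x q : ℝ} (hx : 0 ≤ x) (hq : 0 ≤ q) (hqx : q ≤ exp (-x)) :
    hill' x ≤ -2 * (q / (1 + q ^ 2)) := by
  rw [hill'_eq]
  have := div_one_add_sq_le_div_one_add_sq hq hqx (exp_le_one_iff.mpr (neg_nonpos.mpr hx))
  linarith

lemma le_hill'_of_exp_neg_le {x q : ℝ} (hqx : exp (-x) ≤ q) (hq : q ≤ 1) :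
    -2 * (q / (1 + q ^ 2)) ≤ hill' x := by
  rw [hill'_eq]
  have := div_one_add_sq_le_div_one_add_sq (exp_pos _).le hqx hq
  linarith

lemma hillTangentDefect_eq (L x : ℝ) :
    hillTangentDefect L x =
      π - 2 * arctan (exp (x - L)) - 2 * arctan (exp (-x)) + L * hill' x := by
  rw [hillTangentDefect, ← neg_sub L x, hill_neg, hill_eq_two_mul_arctan_exp,
    hill_eq_two_mul_arctan_exp, neg_sub]

lemma hillTangentDefect_le {L x p q : ℝ} {n : ℕ} (hn : Even n) (hL : 0 ≤ L) (hx : 0 ≤ x)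
    (hp : 0 ≤ p) (hpx : p ≤ exp (x - L)) (hq : 0 ≤ q) (hqx : q ≤ exp (-x)) :
    hillTangentDefect L x ≤
      π - 2 * arctanTaylor n p - 2 * arctanTaylor n q + L * (-2 * (q / (1 + q ^ 2))) := by
  rw [hillTangentDefect_eq]
  have := (arctanTaylor_le_arctan hn hp).trans (arctan_le_arctan_iff.mpr hpx)
  have := (arctanTaylor_le_arctan hn hq).trans (arctan_le_arctan_iff.mpr hqx)
  have := mul_le_mul_of_nonneg_left (hill'_le_of_le_exp_neg hx hq hqx) hL
  linarith

lemma le_hillTangentDefect {L x p q : ℝ} {n : ℕ} (hn : Odd n) (hL : 0 ≤ L)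
    (hpx : exp (x - L) ≤ p) (hqx : exp (-x) ≤ q) (hq : q ≤ 1) :
    π - 2 * arctanTaylor n p - 2 * arctanTaylor n q + L * (-2 * (q / (1 + q ^ 2))) ≤
      hillTangentDefect L x := by
  rw [hillTangentDefect_eq]
  have := (arctan_le_arctan_iff.mpr hpx).trans
    (arctan_le_arctanTaylor hn ((exp_pos _).le.trans hpx))
  have := (arctan_le_arctan_iff.mpr hqx).trans
    (arctan_le_arctanTaylor hn ((exp_pos _).le.trans hqx))
  have := mul_le_mul_of_nonneg_left (le_hill'_of_exp_neg_le hqx hq) hL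
  linarith

lemma exp_mem_Icc_of_taylor {x lo hi : ℝ} (n : ℕ) (hn : 0 < n) (hx : |x| ≤ 1)
    (hlo : lo ≤
      ∑ m ∈ Finset.range n, x ^ m / m.factorial - |x| ^ n * (n.succ / (n.factorial * n)))
    (hhi : ∑ m ∈ Finset.range n, x ^ m / m.factorial + |x| ^ n * (n.succ / (n.factorial * n))
      ≤ hi) :
    exp x ∈ Set.Icc lo hi := by
  have h := abs_le.mp (exp_bound hx hn)
  constructor <;> linarith [h.1, h.2]

lemma exp_neg_0475_mem_Icc : exp (-0.475) ∈ Set.Icc 0.62188 0.62189 := by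
  apply exp_mem_Icc_of_taylor 8 <;> norm_num [abs_le, Finset.sum_range_succ, Nat.factorial]

lemma exp_neg_04756_mem_Icc : exp (-0.4756) ∈ Set.Icc 0.62151 0.62152 := by
  apply exp_mem_Icc_of_taylor 8 <;> norm_num [abs_le, Finset.sum_range_succ, Nat.factorial]

lemma hillTangentDefect_148_0475_neg : hillTangentDefect 1.48 0.475 < 0 := by
  -- `exp_bound` needs `|x| ≤ 1`, so `exp (0.475 - 1.48)` is taken as a square.
  have hsqrt : exp (-0.5025) ∈ Set.Icc 0.605 0.60502 := by
    apply exp_mem_Icc_of_taylor 8 <;> norm_num [abs_le, Finset.sum_range_succ, Nat.factorial]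
  have hp : 0.605 ^ 2 ≤ exp (0.475 - 1.48) := calc
    (0.605 : ℝ) ^ 2 ≤ exp (-0.5025) ^ 2 := by gcongr; exact hsqrt.1
    _ = exp (0.475 - 1.48) := by rw [← exp_nat_mul]; norm_num
  have h := hillTangentDefect_le (n := 8) (by decide) (by norm_num) (by norm_num) (by norm_num) hp
    (by norm_num) exp_neg_0475_mem_Icc.1
  have := pi_lt_d6
  norm_num [arctanTaylor, Finset.sum_range_succ] at h
  linarith

lemma hillTangentDefect_148_04756_pos : 0 < hillTangentDefect 1.48 0.4756 := by
  have hsqrt : exp (-0.5022) ∈ Set.Icc 0.60519 0.6052 := by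
    apply exp_mem_Icc_of_taylor 8 <;> norm_num [abs_le, Finset.sum_range_succ, Nat.factorial]
  have hp : exp (0.4756 - 1.48) ≤ 0.6052 ^ 2 := calc
    exp (0.4756 - 1.48) = exp (-0.5022) ^ 2 := by rw [← exp_nat_mul]; norm_num
    _ ≤ 0.6052 ^ 2 := by gcongr; exact hsqrt.2
  have h := le_hillTangentDefect (n := 9) (by decide) (by norm_num) hp exp_neg_04756_mem_Icc.2
    (by norm_num)
  have := pi_gt_d6
  norm_num [arctanTaylor, Finset.sum_range_succ] at h
  linarith

/-- If `c` solves `h (c - 1.48) = h c - 1.48 * h' c`, then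
`1.327 < h (c - 1.48) - h c < 1.328`; that is, `G(1.48) ≈ 1.327185`. -/
theorem hill_G_one_point_four_eight_approx {c : ℝ}
    (hc : hill (c - 1.48) = hill c - 1.48 * hill' c) :
    1.327 < hill (c - 1.48) - hill c ∧ hill (c - 1.48) - hill c < 1.328 := by
  have hG : hill (c - 1.48) - hill c = -1.48 * hill' c := by rw [hc]; ring
  obtain ⟨hc₀, hc₁⟩ := hill_tangent_mem_Ioo (by norm_num) hc
  have hmono := strictMonoOn_hillTangentDefect (L := 1.48) (by norm_num)
  have hzero : hillTangentDefect 1.48 c = 0 := by rw [hillTangentDefect, hc]; ring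
  have hac : 0.475 < c := (hmono.lt_iff_lt (by norm_num) ⟨hc₀.le, hc₁.le⟩).mp <| by
    rw [hzero]; exact hillTangentDefect_148_0475_neg
  have hcb : c < 0.4756 := (hmono.lt_iff_lt ⟨hc₀.le, hc₁.le⟩ (by norm_num)).mp <| by
    rw [hzero]; exact hillTangentDefect_148_04756_pos
  have hc_lt : hill' c < hill' 0.4756 :=
    hill'_lt_hill'.mpr (by rwa [abs_of_pos hc₀, abs_of_pos (by norm_num : (0 : ℝ) < 0.4756)])
  have lt_hc : hill' 0.475 < hill' c :=
    hill'_lt_hill'.mpr (by rwa [abs_of_pos hc₀, abs_of_pos (by norm_num : (0 : ℝ) < 0.475)])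
  have hb := hill'_le_of_le_exp_neg (by norm_num) (by norm_num) exp_neg_04756_mem_Icc.1
  have ha := le_hill'_of_exp_neg_le exp_neg_0475_mem_Icc.2 (by norm_num)
  rw [hG]
  constructor <;> linarith
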